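/- arXiv:2203.02501 — 11 statements merged into one kernel-verified Lean document; each statement's English description precedes it below -/
import Mathlib

section
/- Define M : ℕ → ℕ → ℕ recursively by M(0,0) = 1, M(0,m) = 2 for m > 0, M(n,m) = 0 for m < n, M(n,n) = M(n-1,n) for n > 0, M(n,n+1) = M(n-1,n+1) + 2*M(n,n) for n > 0, and M(n,m) = M(n-1,m) + M(n,m-1) for m > n+1 and n > 0. Then for all n, m with m > n, M(n,m) = 2*C(m+n, n), and M(n,n) = C(2n, n). -/
/-- The number of merging paths from `(0,0)` to `(n,m)`. -/
def M : ℕ → ℕ → ℕ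
  | 0, 0 => 1
  | 0, _ + 1 => 2
  | _ + 1, 0 => 0
  | n + 1, m + 1 =>
    if h1 : m + 1 < n + 1 then 0
    else if h2 : m + 1 = n + 1 then M n (m + 1)
    else if h3 : m + 1 = n + 2 then M n (m + 1) + 2 * M (n + 1) (n + 1)
    else M n (m + 1) + M (n + 1) m
termination_by n m => (n, m)
decreasing_by
  all_goals first
    | exact Prod.Lex.left _ _ (by omega)
    | exact Prod.Lex.right _ (by omega)

lemma two_choose (a b : ℕ) (h : a = 2*b + 1) : 2 * a.choose b = (a+1).choose (b+1) := by
  have h1 : a.choose b = a.choose (b+1) := by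
    have h2 := Nat.choose_symm (show b+1 ≤ a by omega)
    rwa [show a - (b+1) = b by omega] at h2
  rw [Nat.choose_succ_succ, ← h1]; ring

lemma key : ∀ n : ℕ, (∀ m, n < m → M n m = 2 * (m + n).choose n) ∧
    M n n = (2 * n).choose n := by
  intro n
  induction n with
  | zero =>
    constructor
    · intro m hm
      match m, hm with
      | k + 1, _ => simp [M]
    · simp [M]
  | succ n ih =>
    obtain ⟨ihr, ihd⟩ := ih
    have hdiag : M (n+1) (n+1) = (2 * (n+1)).choose (n+1) := by
      have : M (n+1) (n+1) = M n (n+1) := by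
        rw [M]; simp
      rw [this, ihr (n+1) (by omega), two_choose _ _ (by ring)]
      congr 1 <;> ring
    refine ⟨?_, hdiag⟩
    intro m
    induction m with
    | zero => omega
    | succ m ihm =>
      intro hm
      rcases Nat.lt_or_ge (n+1) m with hgt | hle
      · -- m + 1 > n + 2
        rw [M]
        rw [dif_neg (by omega), dif_neg (by omega), dif_neg (by omega)]
        rw [ihr (m+1) (by omega), ihm (by omega)]
        have : (m + 1 + (n+1)).choose (n+1) = (m + n + 1).choose n + (m + n + 1).choose (n+1) := by
          rw [show m + 1 + (n+1) = (m+n+1)+1 by ring, Nat.choose_succ_succ]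
        rw [show m + 1 + n = m + n + 1 by ring, show m + (n+1) = m + n + 1 by ring, this]
        ring
      · -- m ≤ n+1, with n+1 < m+1 so m = n+1, m+1 = n+2
        have hm' : m = n + 1 := by omega
        subst hm'
        rw [M]
        rw [dif_neg (by omega), dif_neg (by omega), dif_pos (by ring)]
        rw [ihr (n+2) (by omega), hdiag]
        rw [show n + 1 + 1 + (n + 1) = (2*n+2)+1 by ring, Nat.choose_succ_succ,
          show n + 2 + n = 2*n+2 by ring, show 2*(n+1) = 2*n+2 by ring]
        ring
      
theorem stmt_2 :
    (∀ n m : ℕ, m > n → M n m = 2 * Nat.choose (m + n) n) ∧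
      (∀ n : ℕ, M n n = Nat.choose (2 * n) n) := by
  exact ⟨fun n m h => (key n).1 m h, fun n => (key n).2⟩
end

section
/- Let ℓ be an odd positive natural number. Then 2 * Σ_{i=(ℓ+1)/2}^{ℓ} i * C(ℓ, i) = ℓ * (2^{ℓ-1} + C(ℓ-1, (ℓ-1)/2)). -/
/-!
Absorption `i * C(ℓ, i) = ℓ * C(ℓ - 1, i - 1)` turns the sum into `ℓ` times the upper half
`∑_{j ≥ m} C(2m, j)` of row `2m = ℓ - 1`. By the symmetry of the row this half equals the lower
half, and the two halves together cover the row once with the middle term counted twice.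
-/

open Finset

namespace Nat

theorem sum_Icc_mul_choose_succ (n a b : ℕ) :
    ∑ i ∈ Icc (a + 1) (b + 1), i * (n + 1).choose i = (n + 1) * ∑ j ∈ Icc a b, n.choose j := by
  rw [← map_add_right_Icc, sum_map, mul_sum]
  refine sum_congr rfl fun j _ => ?_
  rw [addRightEmbedding_apply, add_one_mul_choose_eq]
  ring

theorem sum_Icc_choose_eq_sum_range {n k : ℕ} (hk : k ≤ n) :
    ∑ j ∈ Icc k n, n.choose j = ∑ j ∈ range (n - k + 1), n.choose j := by
  refine sum_nbij' (n - ·) (n - ·) ?_ ?_ ?_ ?_ fun j hj => (choose_symm (mem_Icc.1 hj).2).symm <;>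
    intro j hj <;> simp only [mem_Icc, mem_range] at hj ⊢ <;> omega

theorem two_mul_sum_Icc_choose_two_mul (m : ℕ) :
    2 * ∑ j ∈ Icc m (2 * m), (2 * m).choose j = 2 ^ (2 * m) + (2 * m).choose m := by
  have hunion : range (m + 1) ∪ Icc m (2 * m) = range (2 * m + 1) := by
    ext j; simp only [mem_union, mem_range, mem_Icc]; omega
  have hinter : range (m + 1) ∩ Icc m (2 * m) = {m} := by
    ext j; simp only [mem_inter, mem_range, mem_Icc, mem_singleton]; omega
  have hsym : ∑ j ∈ Icc m (2 * m), (2 * m).choose j = ∑ j ∈ range (m + 1), (2 * m).choose j := by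
    simpa only [show 2 * m - m = m by omega] using
      sum_Icc_choose_eq_sum_range (by omega : m ≤ 2 * m)
  have h := sum_union_inter (s₁ := range (m + 1)) (s₂ := Icc m (2 * m)) (f := (2 * m).choose)
  rw [hunion, hinter, sum_range_choose, sum_singleton, ← hsym] at h
  omega

end Nat

theorem stmt_3_general (ℓ : ℕ) (h2 : Odd ℓ) :
    2 * ∑ i ∈ Finset.Icc ((ℓ + 1) / 2) ℓ, i * Nat.choose ℓ i =
      ℓ * (2 ^ (ℓ - 1) + Nat.choose (ℓ - 1) ((ℓ - 1) / 2)) := by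
  obtain ⟨m, rfl⟩ := h2
  rw [show (2 * m + 1 + 1) / 2 = m + 1 by omega, show 2 * m + 1 - 1 = 2 * m by omega,
    show 2 * m / 2 = m by omega, Nat.sum_Icc_mul_choose_succ, mul_left_comm,
    Nat.two_mul_sum_Icc_choose_two_mul]

theorem stmt_3 (ℓ : ℕ) (h1 : 1 ≤ ℓ) (h2 : Odd ℓ) :
    2 * ∑ i ∈ Finset.Icc ((ℓ + 1) / 2) ℓ, i * Nat.choose ℓ i =
      ℓ * (2 ^ (ℓ - 1) + Nat.choose (ℓ - 1) ((ℓ - 1) / 2)) :=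
  stmt_3_general ℓ h2
end

section
/- Let ℓ be an even positive natural number. Then the sum over all sequences c ∈ {0,1}^ℓ of max(h(c), ℓ - h(c)), where h(c) is the number of zeros in c, equals (ℓ/2) * (2^ℓ + C(ℓ, ℓ/2)). -/
open Finset

lemma aux_term (n k : ℕ) (hk : k ≤ n + 1) :
    (2 * n + 2).choose k * (2 * n + 2 - k) = (2 * n + 2) * (2 * n + 1).choose k := by
  have h1 : (2 * n + 1).succ * (2 * n + 1).choose k = (2 * n + 2).choose (k + 1) * (k + 1) :=
    Nat.add_one_mul_choose_eq (2 * n + 1) k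
  have h2 : (2 * n + 2).choose (k + 1) * (k + 1) = (2 * n + 2).choose k * (2 * n + 2 - k) :=
    Nat.choose_succ_right_eq (2 * n + 2) k
  rw [← h2, ← h1, Nat.succ_eq_add_one]

lemma aux_sum (n : ℕ) :
    ∑ k ∈ range (2 * n + 3), (2 * n + 2).choose k * max k (2 * n + 2 - k) =
      (n + 1) * (2 ^ (2 * n + 2) + (2 * n + 2).choose (n + 1)) := by
  have hsplit : ∑ k ∈ range (2 * n + 3), (2 * n + 2).choose k * max k (2 * n + 2 - k)
      = ∑ k ∈ Finset.Ico 0 (n + 2), (2 * n + 2).choose k * max k (2 * n + 2 - k)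
        + ∑ k ∈ Finset.Ico (n + 2) (2 * n + 3), (2 * n + 2).choose k * max k (2 * n + 2 - k) := by
    rw [Finset.sum_Ico_consecutive _ (by omega) (by omega), range_eq_Ico]
  have hfirst : ∑ k ∈ Finset.Ico 0 (n + 2), (2 * n + 2).choose k * max k (2 * n + 2 - k)
      = ∑ k ∈ range (n + 2), (2 * n + 2).choose k * (2 * n + 2 - k) := by
    rw [← range_eq_Ico]
    refine Finset.sum_congr rfl fun k hk => ?_
    rw [mem_range] at hk
    rw [max_eq_right (by omega)]
  have hsecond : ∑ k ∈ Finset.Ico (n + 2) (2 * n + 3), (2 * n + 2).choose k * max k (2 * n + 2 - k)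
      = ∑ k ∈ range (n + 1), (2 * n + 2).choose k * (2 * n + 2 - k) := by
    refine Finset.sum_nbij' (fun k => 2 * n + 2 - k) (fun k => 2 * n + 2 - k) ?_ ?_ ?_ ?_ ?_
    · intro a ha; simp only [Finset.mem_Ico, Finset.mem_range] at ha ⊢; omega
    · intro a ha; simp only [Finset.mem_Ico, Finset.mem_range] at ha ⊢; omega
    · intro a ha; simp only [Finset.mem_Ico, Finset.mem_range] at ha ⊢; omega
    · intro a ha; simp only [Finset.mem_Ico, Finset.mem_range] at ha ⊢; omega
    · intro a ha; simp only [Finset.mem_Ico] at ha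
      rw [max_eq_left (by omega)]
      have : (2 * n + 2).choose (2 * n + 2 - a) = (2 * n + 2).choose a :=
        Nat.choose_symm (by omega)
      rw [this]
      congr 1
      omega
  have hhalf : ∑ k ∈ range (n + 1), (2 * n + 1).choose k = 4 ^ n :=
    Nat.sum_range_choose_halfway n
  have hfirst' : ∑ k ∈ range (n + 2), (2 * n + 2).choose k * (2 * n + 2 - k)
      = (2 * n + 2) * (4 ^ n + (2 * n + 1).choose (n + 1)) := by
    have : ∀ k ∈ range (n + 2), (2 * n + 2).choose k * (2 * n + 2 - k)
        = (2 * n + 2) * (2 * n + 1).choose k := fun k hk =>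
      aux_term n k (by rw [mem_range] at hk; omega)
    rw [Finset.sum_congr rfl this, ← Finset.mul_sum, Finset.sum_range_succ, hhalf]
  have hsecond' : ∑ k ∈ range (n + 1), (2 * n + 2).choose k * (2 * n + 2 - k)
      = (2 * n + 2) * 4 ^ n := by
    have : ∀ k ∈ range (n + 1), (2 * n + 2).choose k * (2 * n + 2 - k)
        = (2 * n + 2) * (2 * n + 1).choose k := fun k hk =>
      aux_term n k (by rw [mem_range] at hk; omega)
    rw [Finset.sum_congr rfl this, ← Finset.mul_sum, hhalf]
  have hc : (2 * n + 2).choose (n + 1) = 2 * (2 * n + 1).choose (n + 1) := by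
    have h1 : (2 * n + 2).choose (n + 1) = (2 * n + 1).choose n + (2 * n + 1).choose (n + 1) :=
      Nat.choose_succ_succ (2 * n + 1) n
    have h2 : (2 * n + 1).choose ((2 * n + 1) - (n + 1)) = (2 * n + 1).choose (n + 1) :=
      Nat.choose_symm (by omega)
    have h3 : (2 * n + 1) - (n + 1) = n := by omega
    rw [h3] at h2
    omega
  rw [hsplit, hfirst, hsecond, hfirst', hsecond', hc]
  have hp : (2 : ℕ) ^ (2 * n + 2) = 4 * 4 ^ n := by
    rw [pow_add, pow_mul]
    ring_nf
  rw [hp]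
  ring

theorem stmt_4 (ℓ : ℕ) (h1 : 1 ≤ ℓ) (h2 : Even ℓ) :
    ∑ c : Fin ℓ → Bool,
        max (Finset.univ.filter (fun i => c i = false)).card
          (ℓ - (Finset.univ.filter (fun i => c i = false)).card) =
      (ℓ / 2) * (2 ^ ℓ + Nat.choose ℓ (ℓ / 2)) := by
  obtain ⟨m, hm⟩ := h2
  obtain ⟨n, rfl⟩ : ∃ n, m = n + 1 := ⟨m - 1, by omega⟩
  subst hm
  have hl : (n + 1) + (n + 1) = 2 * n + 2 := by ring
  rw [hl]
  have hdiv : (2 * n + 2) / 2 = n + 1 := by omega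
  rw [hdiv]
  -- Step 1: transform sum over functions into sum over finsets
  let e : (Fin (2 * n + 2) → Bool) ≃ Finset (Fin (2 * n + 2)) :=
    { toFun := fun c => Finset.univ.filter (fun i => c i = false)
      invFun := fun s => fun i => decide (i ∉ s)
      left_inv := by
        intro c; funext i
        by_cases h : c i = false <;> simp [h]
      right_inv := by
        intro s; ext i
        simp }
  have he : ∀ c : Fin (2 * n + 2) → Bool,
      (Finset.univ.filter (fun i => c i = false)) = e c := fun c => rfl
  have step1 : ∑ c : Fin (2 * n + 2) → Bool,
      max (Finset.univ.filter (fun i => c i = false)).card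
        (2 * n + 2 - (Finset.univ.filter (fun i => c i = false)).card)
      = ∑ s : Finset (Fin (2 * n + 2)), max s.card (2 * n + 2 - s.card) := by
    exact Fintype.sum_equiv e _ _ (fun c => by rw [he c])
  rw [step1]
  have step2 : ∑ s : Finset (Fin (2 * n + 2)), max s.card (2 * n + 2 - s.card)
      = ∑ s ∈ (Finset.univ : Finset (Fin (2 * n + 2))).powerset,
          max s.card (2 * n + 2 - s.card) := by
    rw [Finset.powerset_univ]
  rw [step2, Finset.sum_powerset_apply_card (fun k => max k (2 * n + 2 - k))]
  have hcard : (Finset.univ : Finset (Fin (2 * n + 2))).card = 2 * n + 2 := by simp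
  rw [hcard]
  simp only [smul_eq_mul]
  exact aux_sum n
end

section
/- For every arrival sequence b ∈ {0,1}^ℓ, the final length of the right lane r(b) equals max(h(φ(b)), ℓ - h(φ(b))), where φ(b) = b + p(b) bitwise mod 2 and h counts zeros. -/
/-- Process an arrival sequence with right-lane count `R` and left-lane count `L`:
`false` (a red car) or a shorter-or-equal right lane sends the car right. -/
def procAux : ℕ → ℕ → List Bool → ℕ × ℕ
  | R, L, [] => (R, L)
  | R, L, bi :: rest =>
    if bi = false ∨ R ≤ L then procAux (R + 1) L rest else procAux R (L + 1) rest

/-- Final (right lane length, left lane length) of an arrival sequence. -/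
def proc (b : List Bool) : ℕ × ℕ := procAux 0 0 b

/-- The final length of the right lane. -/
def rlen (b : List Bool) : ℕ := (proc b).1

/-- Number of bounces: steps where `bᵢ = 1` and the lanes are equal. -/
def bncAux : ℕ → ℕ → List Bool → ℕ
  | _, _, [] => 0
  | R, L, bi :: rest =>
    if bi = true ∧ R = L then 1 + bncAux (R + 1) L rest
    else if bi = false ∨ R ≤ L then bncAux (R + 1) L rest
    else bncAux R (L + 1) rest

def bnc (b : List Bool) : ℕ := bncAux 0 0 b

/-- The parity vector: starts at `0` and toggles just after each bounce. -/
def pvAux : ℕ → ℕ → Bool → List Bool → List Bool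
  | _, _, _, [] => []
  | R, L, p, bi :: rest =>
    let p' := if bi = true ∧ R = L then !p else p
    if bi = false ∨ R ≤ L then p :: pvAux (R + 1) L p' rest
    else p :: pvAux R (L + 1) p' rest

def parityVec (b : List Bool) : List Bool := pvAux 0 0 false b

/-- `φ(b) = b + p(b)` bitwise mod 2. -/
def phi (b : List Bool) : List Bool := List.zipWith xor b (parityVec b)


lemma pvAux_length : ∀ (t : List Bool) (R L : ℕ) (p : Bool),
    (pvAux R L p t).length = t.length := by
  intro t
  induction t with
  | nil => intros; simp [pvAux]
  | cons bi rest ih =>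
    intro R L p
    simp only [pvAux]
    split <;> simp [ih]

lemma count_false_add_count_true (z : List Bool) :
    z.count false + z.count true = z.length := by
  induction z with
  | nil => simp
  | cons a t ih => cases a <;> simp [List.count_cons] <;> omega

lemma key_s8 : ∀ (t : List Bool) (R L : ℕ) (p : Bool), L ≤ R →
    (procAux R L t).1 =
      (if p then max (R + (List.zipWith xor t (pvAux R L p t)).count true)
                    (L + (List.zipWith xor t (pvAux R L p t)).count false)
       else max (R + (List.zipWith xor t (pvAux R L p t)).count false)
                (L + (List.zipWith xor t (pvAux R L p t)).count true)) := by
  intro t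
  induction t with
  | nil =>
    intro R L p h
    cases p <;> simp [procAux, pvAux] <;> omega
  | cons bi rest ih =>
    intro R L p hLR
    cases bi with
    | false =>
      rw [show procAux R L (false :: rest) = procAux (R+1) L rest from by
            simp [procAux],
          show pvAux R L p (false :: rest) = p :: pvAux (R+1) L p rest from by
            simp [pvAux]]
      simp only [List.zipWith_cons_cons, List.count_cons]
      rw [ih (R+1) L p (by omega)]
      cases p <;> simp <;> omega
    | true =>
      by_cases hRL : R ≤ L
      · have hEq : R = L := le_antisymm hRL hLR
        rw [show procAux R L (true :: rest) = procAux (R+1) L rest from by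
              simp [procAux, hRL],
            show pvAux R L p (true :: rest) = p :: pvAux (R+1) L (!p) rest from by
              simp [pvAux, hRL, hEq]]
        simp only [List.zipWith_cons_cons, List.count_cons]
        rw [ih (R+1) L (!p) (by omega)]
        cases p <;> simp [hEq] <;> omega
      · have hne : R ≠ L := fun h => hRL h.le
        rw [show procAux R L (true :: rest) = procAux R (L+1) rest from by
              simp [procAux, hRL],
            show pvAux R L p (true :: rest) = p :: pvAux R (L+1) p rest from by
              simp [pvAux, hRL, hne]]
        simp only [List.zipWith_cons_cons, List.count_cons]
        rw [ih R (L+1) p (by omega)]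
        cases p <;> simp <;> omega

theorem stmt_8 (ℓ : ℕ) (b : List Bool) (hb : b.length = ℓ) :
    rlen b = max ((phi b).count false) (ℓ - (phi b).count false) := by
  have hk := key_s8 b 0 0 false (le_refl 0)
  simp only [if_neg (by simp : ¬(false = true)), zero_add] at hk
  have hlen : (phi b).length = ℓ := by
    simp [phi, parityVec, List.length_zipWith, pvAux_length, hb]
  have hct := count_false_add_count_true (phi b)
  rw [hlen] at hct
  have : rlen b = max ((phi b).count false) ((phi b).count true) := by
    simpa [rlen, proc, phi, parityVec] using hk
  omega
end

section
/- Let k ≥ 1 and let m, n be natural numbers with m > k and m > n. The number of binary sequences of length m+n with exactly k zeros whose merging path has at least m-k bounces equals C(m+n, n-(m-k)+1). -/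
/-- Binomial coefficient with integer lower index, zero when negative. -/
def chooseZ (a : ℕ) (b : ℤ) : ℕ := if 0 ≤ b then a.choose b.toNat else 0

/-! ### auxiliary development -/

def vL (l : List Bool) : ℤ := (l.count false : ℤ) - (l.count true : ℤ)

def hitsL (c : ℕ) (l : List Bool) : Prop := ∃ j, vL (l.take j) = -(c : ℤ)

lemma vL_nil : vL [] = 0 := by simp [vL]

lemma vL_cons (b : Bool) (l : List Bool) :
    vL (b :: l) = (if b then -1 else 1) + vL l := by
  cases b <;> simp [vL, List.count_cons] <;> push_cast <;> ring

lemma count_sum (l : List Bool) : l.count false + l.count true = l.length := by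
  induction l with
  | nil => simp
  | cons b rest ih => cases b <;> simp [List.count_cons] <;> omega

lemma hits_cons {z : ℤ} (hz : z ≠ 0) (b : Bool) (l : List Bool) :
    (∃ j, vL ((b :: l).take j) = z) ↔ ∃ j, vL (l.take j) = z - (if b then -1 else 1) := by
  constructor
  · rintro ⟨j, hj⟩
    cases j with
    | zero => simp [vL_nil] at hj; exact absurd hj.symm hz
    | succ j' =>
      refine ⟨j', ?_⟩
      rw [List.take_succ_cons, vL_cons] at hj
      omega
  · rintro ⟨j, hj⟩
    exact ⟨j + 1, by rw [List.take_succ_cons, vL_cons]; omega⟩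

lemma ivt : ∀ (l : List Bool) (z : ℤ), z ≤ 0 → vL l ≤ z → ∃ j, vL (l.take j) = z := by
  intro l
  induction l with
  | nil => intro z h1 h2; exact ⟨0, by simp [vL_nil] at *; omega⟩
  | cons b rest ih =>
    intro z h1 h2
    rcases eq_or_lt_of_le h1 with h0 | h0
    · exact ⟨0, by simp [vL_nil, ← h0]⟩
    · rw [vL_cons] at h2
      obtain ⟨j, hj⟩ := ih (z - (if b then -1 else 1)) (by cases b <;> simp <;> omega)
        (by cases b <;> simp at h2 ⊢ <;> omega)
      exact ⟨j + 1, by rw [List.take_succ_cons, vL_cons]; omega⟩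


lemma hits_cons_true {z : ℤ} (hz : z ≠ 0) (l : List Bool) :
    (∃ j, vL ((true :: l).take j) = z) ↔ ∃ j, vL (l.take j) = z + 1 := by
  rw [hits_cons hz true l]; simp

lemma hits_cons_false {z : ℤ} (hz : z ≠ 0) (l : List Bool) :
    (∃ j, vL ((false :: l).take j) = z) ↔ ∃ j, vL (l.take j) = z - 1 := by
  rw [hits_cons hz false l]; simp

lemma bncAux_cons_bounce (R : ℕ) (rest : List Bool) :
    bncAux R R (true :: rest) = 1 + bncAux (R + 1) R rest := by simp [bncAux]

lemma bncAux_cons_false (R L : ℕ) (rest : List Bool) :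
    bncAux R L (false :: rest) = bncAux (R + 1) L rest := by simp [bncAux]

lemma bncAux_cons_true_gt {R L : ℕ} (h : L < R) (rest : List Bool) :
    bncAux R L (true :: rest) = bncAux R (L + 1) rest := by
  have h1 : ¬(R = L) := by omega
  have h2 : ¬(R ≤ L) := by omega
  simp [bncAux, h1, h2]

lemma bncAux_iff : ∀ (l : List Bool) (t R L : ℕ), 1 ≤ t → L ≤ R →
    (t ≤ bncAux R L l ↔ ∃ j, vL (l.take j) = (L : ℤ) - R + 1 - 2 * t) := by
  intro l
  induction l with
  | nil =>
    intro t R L ht hLR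
    simp only [bncAux, List.take_nil]
    constructor
    · intro h; omega
    · rintro ⟨j, hj⟩; simp [vL_nil] at hj; omega
  | cons b rest ih =>
    intro t R L ht hLR
    by_cases hb : b = true ∧ R = L
    · obtain ⟨hb1, hb2⟩ := hb
      subst hb1; subst hb2
      rw [bncAux_cons_bounce]
      rcases Nat.lt_or_ge t 2 with ht2 | ht2
      · have htt : t = 1 := by omega
        subst htt
        constructor
        · intro _
          refine ⟨1, ?_⟩
          rw [List.take_succ_cons, List.take_zero, vL_cons, vL_nil]
          norm_num
        · intro _; omega
      · have step : t ≤ 1 + bncAux (R + 1) R rest ↔ t - 1 ≤ bncAux (R + 1) R rest := by omega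
        rw [step, ih (t - 1) (R + 1) R (by omega) (by omega),
          hits_cons_true (by push_cast; omega) rest]
        constructor
        · rintro ⟨j, hj⟩; exact ⟨j, by omega⟩
        · rintro ⟨j, hj⟩; exact ⟨j, by omega⟩
    · by_cases hb2 : b = false ∨ R ≤ L
      · have hbf : b = false := by
          rcases hb2 with h | h
          · exact h
          · cases b
            · rfl
            · exact absurd ⟨rfl, le_antisymm h hLR⟩ hb
        subst hbf
        rw [bncAux_cons_false,
          ih t (R + 1) L ht (by omega), hits_cons_false (by push_cast; omega) rest]
        constructor
        · rintro ⟨j, hj⟩; exact ⟨j, by push_cast at hj ⊢; omega⟩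
        · rintro ⟨j, hj⟩; exact ⟨j, by push_cast at hj ⊢; omega⟩
      · have hbt : b = true := by
          cases b
          · exact absurd (Or.inl rfl) hb2
          · rfl
        subst hbt
        have hRL : L < R := by
          rcases Nat.lt_or_ge L R with h | h
          · exact h
          · exact absurd (Or.inr h) hb2
        rw [bncAux_cons_true_gt hRL,
          ih t R (L + 1) ht (by omega), hits_cons_true (by push_cast; omega) rest]
        constructor
        · rintro ⟨j, hj⟩; exact ⟨j, by push_cast at hj ⊢; omega⟩
        · rintro ⟨j, hj⟩; exact ⟨j, by push_cast at hj ⊢; omega⟩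

def flipF : ℕ → List Bool → List Bool
  | _, [] => []
  | c, true :: rest => if c = 1 then true :: rest.map not else true :: flipF (c - 1) rest
  | c, false :: rest => false :: flipF (c + 1) rest

lemma flipF_length : ∀ (l : List Bool) (c : ℕ), (flipF c l).length = l.length := by
  intro l
  induction l with
  | nil => intro c; simp [flipF]
  | cons b rest ih =>
    intro c
    cases b
    · simp [flipF, ih]
    · by_cases hc : c = 1 <;> simp [flipF, hc, ih]

lemma flipF_invol : ∀ (l : List Bool) (c : ℕ), 1 ≤ c → flipF c (flipF c l) = l := by
  intro l
  induction l with
  | nil => intro c _; simp [flipF]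
  | cons b rest ih =>
    intro c hc
    cases b
    · simp only [flipF, ih (c + 1) (by omega : 1 ≤ c + 1)]
    · by_cases hc1 : c = 1
      · simp [flipF, hc1, Function.comp_def]
      · simp only [flipF, if_neg hc1, ih (c - 1) (by omega : 1 ≤ c - 1)]

lemma hits_false_cons {c : ℕ} (hc : 1 ≤ c) (l : List Bool) :
    hitsL c (false :: l) ↔ hitsL (c + 1) l := by
  unfold hitsL
  rw [hits_cons (by omega) false l]
  constructor
  · rintro ⟨j, hj⟩; exact ⟨j, by simp at hj ⊢; push_cast; omega⟩
  · rintro ⟨j, hj⟩; exact ⟨j, by push_cast at hj; simp; omega⟩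

lemma hits_true_cons {c : ℕ} (hc : 2 ≤ c) (l : List Bool) :
    hitsL c (true :: l) ↔ hitsL (c - 1) l := by
  unfold hitsL
  rw [hits_cons (by omega) true l]
  constructor
  · rintro ⟨j, hj⟩; exact ⟨j, by simp at hj ⊢; push_cast; omega⟩
  · rintro ⟨j, hj⟩; exact ⟨j, by push_cast at hj; simp; omega⟩

lemma count_false_map_not (l : List Bool) : (l.map not).count false = l.count true := by
  induction l with
  | nil => simp
  | cons b rest ih => cases b <;> simp [List.count_cons, ih]

lemma flipF_count : ∀ (l : List Bool) (c : ℕ), 1 ≤ c → hitsL c l →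
    (flipF c l).count false + (l.count false + c) = l.length := by
  intro l
  induction l with
  | nil =>
    intro c hc h
    exfalso
    obtain ⟨j, hj⟩ := h
    simp [vL_nil] at hj
    omega
  | cons b rest ih =>
    intro c hc h
    cases b
    · have h' : hitsL (c + 1) rest := (hits_false_cons hc rest).1 h
      have := ih (c + 1) (by omega : 1 ≤ c + 1) h'
      simp only [flipF, List.count_cons, List.length_cons]
      simp
      omega
    · by_cases hc1 : c = 1
      · subst hc1
        simp only [flipF, if_pos rfl, List.count_cons, List.length_cons]
        have h1 := count_false_map_not rest
        have h2 := count_sum rest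
        simp
        omega
      · have h' : hitsL (c - 1) rest := (hits_true_cons (by omega) rest).1 h
        have := ih (c - 1) (by omega : 1 ≤ c - 1) h'
        simp only [flipF, if_neg hc1, List.count_cons, List.length_cons]
        simp
        omega

lemma flipF_hits : ∀ (l : List Bool) (c : ℕ), 1 ≤ c → hitsL c l → hitsL c (flipF c l) := by
  intro l
  induction l with
  | nil => intro c hc h; simpa [flipF] using h
  | cons b rest ih =>
    intro c hc h
    cases b
    · have h' : hitsL (c + 1) rest := (hits_false_cons hc rest).1 h
      have := ih (c + 1) (by omega : 1 ≤ c + 1) h'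
      simpa only [flipF, hits_false_cons hc] using this
    · by_cases hc1 : c = 1
      · subst hc1
        exact ⟨1, by simp [flipF, List.take_succ_cons, vL_cons, vL_nil]⟩
      · have h' : hitsL (c - 1) rest := (hits_true_cons (by omega) rest).1 h
        have := ih (c - 1) (by omega : 1 ≤ c - 1) h'
        simpa only [flipF, if_neg hc1, hits_true_cons (show 2 ≤ c by omega)] using this

lemma count_ofFn {N : ℕ} (c : Fin N → Bool) (a : Bool) :
    (List.ofFn c).count a = (Finset.univ.filter fun i => c i = a).card := by
  have := Fin.card_filter_univ_eq_vector_get_eq_count a (List.Vector.ofFn c)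
  simpa using this.symm

lemma ofFn_getD {N : ℕ} {l : List Bool} (h : l.length = N) :
    List.ofFn (fun i : Fin N => l.getD i.val false) = l := by
  apply List.ext_getElem (by simp [h])
  intro i h1 h2
  simp [List.getD, List.getElem?_eq_getElem h2]

lemma getD_ofFn {N : ℕ} (c : Fin N → Bool) (i : Fin N) :
    (List.ofFn c).getD i.val false = c i := by
  have h2 : i.val < (List.ofFn c).length := by simp
  simp [List.getD_eq_getElem _ false h2]

theorem stmt_9 (m n k : ℕ) (hk : 1 ≤ k) (hmk : m > k) (hmn : m > n) :
    (Finset.univ.filter (fun c : Fin (m + n) → Bool =>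
        (List.ofFn c).count false = k ∧ m - k ≤ bnc (List.ofFn c))).card =
      chooseZ (m + n) ((n : ℤ) - ((m : ℤ) - (k : ℤ)) + 1) := by
  set N := m + n with hN
  set t := m - k with ht'
  set r := 2 * t - 1 with hr'
  have ht : 1 ≤ t := by omega
  have hr1 : 1 ≤ r := by omega
  have key : ∀ c : Fin N → Bool, (m - k ≤ bnc (List.ofFn c) ↔ hitsL r (List.ofFn c)) := by
    intro c
    rw [bnc, bncAux_iff (List.ofFn c) t 0 0 ht le_rfl]
    unfold hitsL
    constructor
    · rintro ⟨j, hj⟩; exact ⟨j, by push_cast at hj ⊢; omega⟩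
    · rintro ⟨j, hj⟩; exact ⟨j, by push_cast at hj ⊢; omega⟩
  have hlen : ∀ c : Fin N → Bool, (List.ofFn c).length = N := fun c => by simp
  by_cases hcase : m ≤ n + k + 1
  · -- nonempty case
    have hpos : (0 : ℤ) ≤ (n : ℤ) - ((m : ℤ) - (k : ℤ)) + 1 := by omega
    set k' : ℕ := n + k + 1 - m with hk'
    have hRHS : chooseZ (m + n) ((n : ℤ) - ((m : ℤ) - (k : ℤ)) + 1) = N.choose k' := by
      rw [chooseZ, if_pos hpos]
      congr 1
      omega
    rw [hRHS]
    -- the flip map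
    set Φ : (Fin N → Bool) → (Fin N → Bool) :=
      fun c i => (flipF r (List.ofFn c)).getD i.val false with hΦ
    have ofFn_Φ : ∀ c : Fin N → Bool, List.ofFn (Φ c) = flipF r (List.ofFn c) := by
      intro c
      exact ofFn_getD (by rw [flipF_length, hlen])
    have step1 : (Finset.univ.filter (fun c : Fin N → Bool =>
        (List.ofFn c).count false = k ∧ m - k ≤ bnc (List.ofFn c))).card =
        (Finset.univ.filter (fun c : Fin N → Bool =>
        (List.ofFn c).count false = k')).card := by
      apply Finset.card_bij' (fun c _ => Φ c) (fun d _ => Φ d)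
      · -- forward membership
        intro c hc
        simp only [Finset.mem_filter, Finset.mem_univ, true_and] at hc ⊢
        obtain ⟨h1, h2⟩ := hc
        have hhit : hitsL r (List.ofFn c) := (key c).1 h2
        have hcnt := flipF_count (List.ofFn c) r hr1 hhit
        rw [hlen, h1] at hcnt
        rw [ofFn_Φ]
        omega
      · -- backward membership
        intro d hd
        simp only [Finset.mem_filter, Finset.mem_univ, true_and] at hd ⊢
        have hhit : hitsL r (List.ofFn d) := by
          apply ivt
          · push_cast; omega
          · have h2 := count_sum (List.ofFn d)
            rw [hlen] at h2
            unfold vL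
            push_cast
            omega
        have hcnt := flipF_count (List.ofFn d) r hr1 hhit
        rw [hlen, hd] at hcnt
        constructor
        · rw [ofFn_Φ]; omega
        · rw [key, ofFn_Φ]
          exact flipF_hits (List.ofFn d) r hr1 hhit
      · -- left inverse
        intro c hc
        funext i
        show (flipF r (List.ofFn (Φ c))).getD i.val false = c i
        rw [ofFn_Φ, flipF_invol _ r hr1, getD_ofFn]
      · -- right inverse
        intro d hd
        funext i
        show (flipF r (List.ofFn (Φ d))).getD i.val false = d i
        rw [ofFn_Φ, flipF_invol _ r hr1, getD_ofFn]
    rw [step1]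
    -- count functions with exactly k' falses
    have step2 : (Finset.univ.filter (fun c : Fin N → Bool =>
        (List.ofFn c).count false = k')).card =
        (Finset.powersetCard k' (Finset.univ : Finset (Fin N))).card := by
      apply Finset.card_bij' (fun c _ => Finset.univ.filter (fun i => c i = false))
        (fun s _ => fun i => !(decide (i ∈ s)))
      case hi =>
        intro c hc
        simp only [Finset.mem_filter, Finset.mem_univ, true_and] at hc
        rw [Finset.mem_powersetCard]
        exact ⟨Finset.filter_subset _ _ |>.trans (by simp), by rw [← count_ofFn, hc]⟩
      case hj =>
        intro s hs
        simp only [Finset.mem_powersetCard] at hs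
        simp only [Finset.mem_filter, Finset.mem_univ, true_and]
        rw [count_ofFn]
        rw [show (Finset.univ.filter fun i => (!(decide (i ∈ s))) = false) =
          Finset.univ.filter (fun i => i ∈ s) by ext x; simp]
        rw [Finset.filter_univ_mem]
        exact hs.2
      case left_inv =>
        intro c hc
        funext i
        cases h : c i <;> simp [h]
      case right_inv =>
        intro s hs
        ext i
        simp
    rw [step2, Finset.card_powersetCard, Finset.card_univ, Fintype.card_fin]
  · -- empty case
    have hneg : ¬ (0 : ℤ) ≤ (n : ℤ) - ((m : ℤ) - (k : ℤ)) + 1 := by omega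
    rw [chooseZ, if_neg hneg]
    rw [Finset.card_eq_zero, Finset.filter_eq_empty_iff]
    intro c _
    rintro ⟨h1, h2⟩
    have hhit : hitsL r (List.ofFn c) := (key c).1 h2
    have hcnt := flipF_count (List.ofFn c) r hr1 hhit
    rw [hlen, h1] at hcnt
    omega
end

section
/- For natural numbers n, m, k with m > k, m > n, the number M_{n,k}(m) of merging paths from (0,0) to (n,m) with exactly k zeros satisfies M_{n,k}(m) = C(m+n, n-(m-k)+1) - C(m+n, n-(m-k)-1). -/
/-!
Sort the arrival sequences by their last car. A sequence reaching `(m, n)` with `k` red cars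
extends one reaching `(m - 1, n)` with `k - 1` red cars by a red car, one reaching `(m - 1, n)`
with equal lanes by a blue car, or one reaching `(m, n - 1)` with a longer right lane by a blue
car. So the counts are determined by this recurrence and the empty sequence. The closed form,
written with ballot numbers `C(N, j) - C(N, j - 1)`, is a sum of two of them for `n, k < m` and
a single one on the boundary `n = m` or `k = m`; it satisfies the same recurrence by Pascal's
rule, together with `C(2M + 1, M + 1) = C(2M + 1, M)` at the corner `n = k = m`.
-/

open Finset

lemma chooseZ_succ (N : ℕ) (j : ℤ) : chooseZ (N + 1) j = chooseZ N (j - 1) + chooseZ N j := by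
  unfold chooseZ
  rcases lt_trichotomy j 0 with h | rfl | h
  · rw [if_neg (by omega), if_neg (by omega), if_neg (by omega)]
  · simp
  · rw [if_pos h.le, if_pos (by omega), if_pos h.le, show j.toNat = (j - 1).toNat + 1 by omega,
      Nat.choose_succ_succ]

def ballot (N : ℕ) (j : ℤ) : ℤ := chooseZ N j - chooseZ N (j - 1)

lemma ballot_succ (N : ℕ) (j : ℤ) : ballot (N + 1) j = ballot N (j - 1) + ballot N j := by
  simp only [ballot, chooseZ_succ]
  push_cast
  ring

lemma ballot_of_neg (N : ℕ) {j : ℤ} (hj : j < 0) : ballot N j = 0 := by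
  rw [ballot, chooseZ, chooseZ, if_neg (by omega), if_neg (by omega), sub_self]

lemma ballot_central (M : ℕ) : ballot (2 * M + 1) (M + 1) = 0 := by
  rw [ballot, chooseZ, chooseZ, if_pos (by omega), if_pos (by omega),
    show ((M : ℤ) + 1).toNat = M + 1 by omega, show ((M : ℤ) + 1 - 1).toNat = M by omega,
    Nat.choose_symm_half, sub_self]

def mergeStep (p : ℕ × ℕ) (b : Bool) : ℕ × ℕ :=
  if b = false ∨ p.1 ≤ p.2 then (p.1 + 1, p.2) else (p.1, p.2 + 1)

lemma procAux_eq_foldl (R L : ℕ) (l : List Bool) :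
    procAux R L l = l.foldl mergeStep (R, L) := by
  induction l generalizing R L with
  | nil => rfl
  | cons b l ih =>
    simp only [procAux, List.foldl_cons, mergeStep]
    split <;> apply ih

lemma proc_append_singleton (l : List Bool) (b : Bool) :
    proc (l ++ [b]) = mergeStep (proc l) b := by
  simp only [proc, procAux_eq_foldl, List.foldl_append, List.foldl_cons, List.foldl_nil]

lemma proc_append_false_eq_iff (l : List Bool) (m n k : ℕ) :
    (l ++ [false]).count false = k ∧ proc (l ++ [false]) = (m, n) ↔
      0 < m ∧ 0 < k ∧ (l.count false = k - 1 ∧ proc l = (m - 1, n)) := by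
  rw [List.count_append, List.count_singleton_self, proc_append_singleton]
  obtain ⟨R, L⟩ := proc l
  simp only [mergeStep, true_or, if_true, Prod.mk.injEq]
  omega

lemma proc_append_true_eq_iff (l : List Bool) (m n k : ℕ) :
    (l ++ [true]).count false = k ∧ proc (l ++ [true]) = (m, n) ↔
      (0 < m ∧ m ≤ n + 1 ∧ (l.count false = k ∧ proc l = (m - 1, n))) ∨
        (0 < n ∧ n ≤ m ∧ (l.count false = k ∧ proc l = (m, n - 1))) := by
  rw [List.count_append, show [true].count false = 0 from rfl, add_zero, proc_append_singleton]
  obtain ⟨R, L⟩ := proc l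
  simp only [mergeStep, Bool.true_eq_false, false_or]
  split_ifs <;> simp only [Prod.mk.injEq] <;> omega

lemma sum_ofFn_succ {M : Type*} [AddCommMonoid M] (d : ℕ) (f : List Bool → M) :
    ∑ c : Fin (d + 1) → Bool, f (List.ofFn c) =
      ∑ c : Fin d → Bool, (f (List.ofFn c ++ [false]) + f (List.ofFn c ++ [true])) := by
  have ofFn_snoc (c : Fin d → Bool) (b : Bool) :
      List.ofFn (Fin.snoc c b : Fin (d + 1) → Bool) = List.ofFn c ++ [b] := by
    rw [List.ofFn_succ']
    simp
  rw [← (Fin.snocEquiv fun _ => Bool).sum_comp, Fintype.sum_prod_type, Fintype.sum_bool,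
    add_comm, ← Finset.sum_add_distrib]
  simp only [Fin.snocEquiv, Equiv.coe_fn_mk, ofFn_snoc]

def mergeCount (d m n k : ℕ) : ℕ :=
  #{c : Fin d → Bool | (List.ofFn c).count false = k ∧ proc (List.ofFn c) = (m, n)}

/-- The last car is red, or blue and sent right (possible only if `m - 1 ≤ n`), or blue and
sent left (possible only if `n - 1 < m`). -/
def lastCarSum {α : Type*} [AddCommMonoid α] (f : ℕ → ℕ → ℕ → α) (m n k : ℕ) : α :=
  (if 0 < m ∧ 0 < k then f (m - 1) n (k - 1) else 0) +
    (if 0 < m ∧ m ≤ n + 1 then f (m - 1) n k else 0) +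
    (if 0 < n ∧ n ≤ m then f m (n - 1) k else 0)

lemma indicator_append_false (l : List Bool) (m n k : ℕ) :
    (if (l ++ [false]).count false = k ∧ proc (l ++ [false]) = (m, n) then 1 else 0 : ℕ) =
      if 0 < m ∧ 0 < k then
        (if l.count false = k - 1 ∧ proc l = (m - 1, n) then 1 else 0) else 0 := by
  simp only [proc_append_false_eq_iff, ← and_assoc, ite_and]

lemma indicator_append_true (l : List Bool) (m n k : ℕ) :
    (if (l ++ [true]).count false = k ∧ proc (l ++ [true]) = (m, n) then 1 else 0 : ℕ) =
      (if 0 < m ∧ m ≤ n + 1 then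
        (if l.count false = k ∧ proc l = (m - 1, n) then 1 else 0) else 0) +
      (if 0 < n ∧ n ≤ m then
        (if l.count false = k ∧ proc l = (m, n - 1) then 1 else 0) else 0) := by
  simp only [proc_append_true_eq_iff]
  -- the two predecessor states differ, so at most one disjunct holds
  grind

lemma mergeCount_succ (d m n k : ℕ) :
    mergeCount (d + 1) m n k = lastCarSum (mergeCount d) m n k := by
  simp only [lastCarSum, mergeCount, card_filter]
  rw [sum_ofFn_succ d fun l => if l.count false = k ∧ proc l = (m, n) then 1 else 0]
  simp only [indicator_append_false, indicator_append_true, Finset.sum_add_distrib,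
    Finset.sum_ite_irrel, Finset.sum_const_zero, add_assoc]

lemma mergeCount_zero (k : ℕ) : mergeCount 0 0 0 k = if k = 0 then 1 else 0 := by
  simp [mergeCount, proc, procAux, eq_comm, apply_ite Finset.card]

/-- Here `n + k - m` is `n` minus the number `m - k` of blue cars in the right lane. -/
def mergeFormula (m n k : ℕ) : ℤ :=
  if n < m ∧ k < m then ballot (m + n) (n + k - m + 1) + ballot (m + n) (n + k - m)
  else if n ≤ m ∧ k ≤ m then ballot (m + n) (n + k - m)
  else 0

lemma mergeFormula_of_lt {m n k N : ℕ} {j : ℤ} (hn : n < m) (hk : k < m) (hN : m + n = N)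
    (hj : (n : ℤ) + k - m = j) : mergeFormula m n k = ballot N (j + 1) + ballot N j := by
  rw [mergeFormula, if_pos ⟨hn, hk⟩, hN, hj]

lemma mergeFormula_of_boundary {m n k N : ℕ} {j : ℤ} (hn : n ≤ m) (hk : k ≤ m)
    (h : n = m ∨ k = m) (hN : m + n = N) (hj : (n : ℤ) + k - m = j) :
    mergeFormula m n k = ballot N j := by
  rw [mergeFormula, if_neg (by omega), if_pos ⟨hn, hk⟩, hN, hj]

lemma mergeFormula_of_gt {m n k : ℕ} (h : m < n ∨ m < k) : mergeFormula m n k = 0 := by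
  rw [mergeFormula, if_neg (by omega), if_neg (by omega)]

lemma lastCarSum_mergeFormula_of_gt {m n k : ℕ} (h : m < n ∨ m < k) :
    lastCarSum mergeFormula m n k = mergeFormula m n k := by
  rw [mergeFormula_of_gt h, lastCarSum]
  split_ifs <;> simp (disch := omega) only [mergeFormula_of_gt, add_zero]

lemma lastCarSum_mergeFormula_lanes_eq {M k : ℕ} (hk : k ≤ M + 1) :
    lastCarSum mergeFormula (M + 1) (M + 1) k = mergeFormula (M + 1) (M + 1) k := by
  simp only [lastCarSum, Nat.add_sub_cancel]
  rw [mergeFormula_of_gt (m := M) (by omega), mergeFormula_of_gt (m := M) (by omega),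
    if_pos (show 0 < M + 1 ∧ M + 1 ≤ M + 1 by omega)]
  simp only [ite_self, zero_add]
  rcases hk.lt_or_eq with hk | rfl
  · rw [mergeFormula_of_boundary (N := 2 * M + 1 + 1) (j := k) le_rfl hk.le (by omega)
        (by omega) (by push_cast; ring),
      mergeFormula_of_lt (N := 2 * M + 1) (j := k - 1) (by omega) hk (by omega)
        (by push_cast; ring), ballot_succ (2 * M + 1)]
    ring_nf
  · rw [mergeFormula_of_boundary (N := 2 * M + 1 + 1) (j := M + 1) le_rfl le_rfl (by omega)
        (by omega) (by push_cast; ring),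
      mergeFormula_of_boundary (N := 2 * M + 1) (j := M) (by omega) le_rfl (by omega)
        (by omega) (by push_cast; ring), ballot_succ (2 * M + 1), add_sub_cancel_right,
      ballot_central]
    ring_nf

lemma lastCarSum_mergeFormula_all_red {M n : ℕ} (hn : n ≤ M) :
    lastCarSum mergeFormula (M + 1) n (M + 1) = mergeFormula (M + 1) n (M + 1) := by
  have hC : (if 0 < n ∧ n ≤ M + 1 then mergeFormula (M + 1) (n - 1) (M + 1) else 0) =
      ballot (M + n) (n - 1) := by
    rcases Nat.eq_zero_or_pos n with rfl | hn0
    · rw [if_neg (by omega), ballot_of_neg _ (by omega)]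
    · exact (if_pos ⟨hn0, by omega⟩).trans (mergeFormula_of_boundary (by omega) le_rfl
        (by omega) (by omega) (by push_cast [hn0]; ring))
  rw [lastCarSum, hC, if_pos (show 0 < M + 1 ∧ 0 < M + 1 by omega), Nat.add_sub_cancel,
    mergeFormula_of_gt (m := M) (n := n) (k := M + 1) (by omega), ite_self,
    mergeFormula_of_boundary (N := M + n) (j := n) hn le_rfl (by omega) rfl (by ring),
    mergeFormula_of_boundary (N := M + n + 1) (j := n) (by omega) le_rfl (by omega) (by ring)
      (by push_cast; ring), ballot_succ]
  ring_nf

lemma lastCarSum_mergeFormula_of_lt {M n k : ℕ} (hn : n ≤ M) (hk : k ≤ M) :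
    lastCarSum mergeFormula (M + 1) n k = mergeFormula (M + 1) n k := by
  have hC : (if 0 < n ∧ n ≤ M + 1 then mergeFormula (M + 1) (n - 1) k else 0) =
      ballot (M + n) (n + k - M - 2 + 1) + ballot (M + n) (n + k - M - 2) := by
    rcases Nat.eq_zero_or_pos n with rfl | hn0
    · rw [if_neg (by omega), ballot_of_neg _ (by omega), ballot_of_neg _ (by omega), add_zero]
    · exact (if_pos ⟨hn0, by omega⟩).trans
        (mergeFormula_of_lt (by omega) (by omega) (by omega) (by push_cast [hn0]; ring))
  rw [lastCarSum, hC, mergeFormula_of_lt (m := M + 1) (n := n) (k := k) (N := M + n + 1)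
    (j := n + k - M - 1) (by omega) (by omega) (by ring) (by push_cast; ring), ballot_succ,
    ballot_succ]
  simp only [Nat.zero_lt_succ, true_and, Nat.add_sub_cancel]
  rcases hn.lt_or_eq with hn | rfl
  · have hA : (if 0 < k then mergeFormula M n (k - 1) else 0) =
        ballot (M + n) (n + k - M - 1 + 1) + ballot (M + n) (n + k - M - 1) := by
      rcases Nat.eq_zero_or_pos k with rfl | hk0
      · rw [if_neg (lt_irrefl 0), ballot_of_neg _ (by omega), ballot_of_neg _ (by omega),
          add_zero]
      · exact (if_pos hk0).trans (mergeFormula_of_lt hn (by omega) rfl (by push_cast [hk0]; ring))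
    rw [hA, if_neg (show ¬ M + 1 ≤ n + 1 by omega)]
    ring_nf
  · have hA : (if 0 < k then mergeFormula n n (k - 1) else 0) = ballot (n + n) (k - 1) := by
      rcases Nat.eq_zero_or_pos k with rfl | hk0
      · rw [if_neg (lt_irrefl 0), ballot_of_neg _ (by omega)]
      · exact (if_pos hk0).trans (mergeFormula_of_boundary le_rfl (by omega) (by omega) rfl
          (by push_cast [hk0]; ring))
    rw [hA, if_pos le_rfl, mergeFormula_of_boundary (N := n + n) (j := k) le_rfl hk
      (by omega) rfl (by ring)]
    ring_nf

lemma Nat.cast_lastCarSum (f : ℕ → ℕ → ℕ → ℕ) (m n k : ℕ) :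
    ((lastCarSum f m n k : ℕ) : ℤ) = lastCarSum (fun a b c => (f a b c : ℤ)) m n k := by
  simp only [lastCarSum]
  push_cast
  rfl

lemma lastCarSum_congr {α : Type*} [AddCommMonoid α] {f g : ℕ → ℕ → ℕ → α} {m n k : ℕ}
    (h : ∀ a b c, a + b + 1 = m + n → f a b c = g a b c) :
    lastCarSum f m n k = lastCarSum g m n k := by
  unfold lastCarSum
  split_ifs <;> simp (disch := omega) only [h]

lemma lastCarSum_mergeFormula {m n k : ℕ} (h : 0 < m + n) :
    lastCarSum mergeFormula m n k = mergeFormula m n k := by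
  by_cases hout : m < n ∨ m < k
  · exact lastCarSum_mergeFormula_of_gt hout
  obtain ⟨M, rfl⟩ : ∃ M, m = M + 1 := ⟨m - 1, by omega⟩
  by_cases hn : n = M + 1
  · subst hn
    exact lastCarSum_mergeFormula_lanes_eq (by omega)
  by_cases hk : k = M + 1
  · subst hk
    exact lastCarSum_mergeFormula_all_red (by omega)
  exact lastCarSum_mergeFormula_of_lt (by omega) (by omega)

theorem mergeCount_eq_mergeFormula (d m n k : ℕ) (h : m + n = d) :
    (mergeCount d m n k : ℤ) = mergeFormula m n k := by
  induction d generalizing m n k with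
  | zero =>
    obtain ⟨rfl, rfl⟩ : m = 0 ∧ n = 0 := by omega
    rw [mergeCount_zero]
    rcases Nat.eq_zero_or_pos k with rfl | hk
    · rw [mergeFormula_of_boundary (N := 0) (j := 0) le_rfl le_rfl (Or.inl rfl) rfl (by simp)]
      simp [ballot, chooseZ]
    · rw [if_neg hk.ne', mergeFormula_of_gt (Or.inr hk), Nat.cast_zero]
  | succ d ih =>
    rw [mergeCount_succ, Nat.cast_lastCarSum, ← lastCarSum_mergeFormula (by omega)]
    exact lastCarSum_congr fun a b c hab => ih a b c (by omega)

theorem stmt_10 (m n k : ℕ) (hmk : m > k) (hmn : m > n) :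
    ((Finset.univ.filter (fun c : Fin (m + n) → Bool =>
        (List.ofFn c).count false = k ∧ proc (List.ofFn c) = (m, n))).card : ℤ) =
      chooseZ (m + n) ((n : ℤ) - ((m : ℤ) - (k : ℤ)) + 1) -
        chooseZ (m + n) ((n : ℤ) - ((m : ℤ) - (k : ℤ)) - 1) := by
  have h := mergeCount_eq_mergeFormula (m + n) m n k rfl
  rw [mergeFormula_of_lt hmn hmk rfl (show (n : ℤ) + k - m = n - (m - k) by ring), ballot,
    ballot, add_sub_cancel_right] at h
  rw [mergeCount] at h
  linarith
end

section
/- For natural numbers m, n, k with m > k+1 and m > n > 0, M_{n,k}(m) = M_{n-1,k+2}(m+1), where M_{n,k}(m) is the number of merging paths from (0,0) to (n,m) with exactly k zeros. -/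
/-!
Follow the lane difference `R - L ≥ 0`: a `0` raises it, a `1` lowers it, except that a `1` at
difference `0` bounces it up to `1`. By induction on the number `N` of cars still to come, the
number of continuations from `(R, L)` to `(m, n)` with `k` zeros is
* the ballot number `C(N, k) - C(N, m + 1 - L)` when no bounce is left (`k + R = m`), and
* `C(N, i) - C(N, i + 2)` with `i + 1 = 2m - R - L - k` when a bounce is left (`k + R < m`):
  splitting off the first car is Pascal's rule, and a bounce that uses up the last spare move
  lands in the ballot case with exactly the same value.
From `(0, 0)`, replacing `(m, n, k)` by `(m + 1, n - 1, k + 2)` keeps `N = m + n` and `i`.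
-/

open Finset

lemma add_count_false_le_procAux_fst (R L : ℕ) (b : List Bool) :
    R + b.count false ≤ (procAux R L b).1 := by
  induction b generalizing R L with
  | nil => simp [procAux]
  | cons x b ih =>
    have := ih (R + 1) L
    have := ih R (L + 1)
    cases x <;> by_cases h : R ≤ L <;> simp [procAux, h] <;> omega

lemma card_filter_ofFn_succ {N : ℕ} (p : List Bool → Prop) [DecidablePred p] :
    #{c : Fin (N + 1) → Bool | p (List.ofFn c)} =
      #{c : Fin N → Bool | p (false :: List.ofFn c)} +
        #{c : Fin N → Bool | p (true :: List.ofFn c)} := by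
  simp only [card_filter]
  rw [← (Fin.consEquiv fun _ => Bool).sum_comp, Fintype.sum_prod_type, Fintype.sum_bool, add_comm]
  simp [Fin.consEquiv, List.ofFn_succ]

def arrivalCount (m n N R L k : ℕ) : ℕ :=
  #{c : Fin N → Bool | (List.ofFn c).count false = k ∧ procAux R L (List.ofFn c) = (m, n)}

lemma arrivalCount_zero (m n R L k : ℕ) :
    arrivalCount m n 0 R L k = if k = 0 ∧ R = m ∧ L = n then 1 else 0 := by
  simp only [arrivalCount, List.ofFn_zero, List.count_nil, procAux, Prod.mk.injEq]
  by_cases h : k = 0 ∧ R = m ∧ L = n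
  · obtain ⟨rfl, rfl, rfl⟩ := h
    simp
  · rw [if_neg h, card_eq_zero, filter_eq_empty_iff]
    grind

lemma arrivalCount_succ (m n N R L k : ℕ) :
    arrivalCount m n (N + 1) R L k =
      (if k = 0 then 0 else arrivalCount m n N (R + 1) L (k - 1)) +
        if R ≤ L then arrivalCount m n N (R + 1) L k else arrivalCount m n N R (L + 1) k := by
  rw [arrivalCount, card_filter_ofFn_succ (fun b => b.count false = k ∧ procAux R L b = (m, n))]
  congr 1
  · split_ifs with hk
    · simp [hk]
    · refine congrArg card (filter_congr fun c _ => ?_)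
      rw [List.count_cons_self, procAux, if_pos (Or.inl rfl)]
      exact and_congr_left fun _ => by omega
  · split_ifs with h <;> simp [arrivalCount, procAux, h]

lemma arrivalCount_eq_zero_of_lt {m n N R L k : ℕ} (h : m < k + R) :
    arrivalCount m n N R L k = 0 := by
  refine card_eq_zero.2 (filter_false_of_mem fun c _ ⟨hk, hc⟩ => ?_)
  have := add_count_false_le_procAux_fst R L (List.ofFn c)
  rw [hk, hc] at this
  omega

lemma arrivalCount_add_choose_of_eq {m n N R L k : ℕ} (hmn : n ≤ m) (hLR : L ≤ R)
    (hN : N + R + L = m + n) (hk : k + R = m) :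
    arrivalCount m n N R L k + N.choose (m + 1 - L) = N.choose k := by
  induction N generalizing R L k with
  | zero =>
    rw [arrivalCount_zero, Nat.choose_eq_zero_of_lt (by omega : 0 < m + 1 - L)]
    split_ifs with h
    · simp [h.1]
    · rw [Nat.choose_eq_zero_of_lt (by omega)]
  | succ N ih =>
    have hzero : (if k = 0 then 0 else arrivalCount m n N (R + 1) L (k - 1)) +
        N.choose (m + 1 - L) + N.choose k = (N + 1).choose k := by
      rcases k with _ | k
      · rw [if_pos rfl, Nat.choose_eq_zero_of_lt (by omega : N < m + 1 - L),
          Nat.choose_zero_right, Nat.choose_zero_right]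
      · rw [if_neg k.succ_ne_zero, Nat.add_sub_cancel, ih (by omega) (by omega) (by omega),
          Nat.choose_succ_succ']
    have hone : (if R ≤ L then arrivalCount m n N (R + 1) L k
        else arrivalCount m n N R (L + 1) k) + N.choose (m - L) = N.choose k := by
      split_ifs with h
      · rw [arrivalCount_eq_zero_of_lt (by omega), show m - L = k by omega, zero_add]
      · have := ih (R := R) (L := L + 1) (k := k) (by omega) (by omega) hk
        rwa [Nat.add_sub_add_right] at this
    have hpascal : (N + 1).choose (m + 1 - L) = N.choose (m - L) + N.choose (m + 1 - L) := by
      rw [show m + 1 - L = m - L + 1 by omega, Nat.choose_succ_succ']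
    rw [arrivalCount_succ]
    omega

lemma arrivalCount_add_choose_of_lt {m n N R L k i : ℕ} (hmn : n < m) (hLR : L ≤ R)
    (hN : N + R + L = m + n) (hk : k + R < m) (hi : R + L + k + i + 1 = 2 * m) :
    arrivalCount m n N R L k + N.choose (i + 2) = N.choose i := by
  induction N generalizing R L k i with
  | zero =>
    rw [arrivalCount_zero, if_neg (by omega), Nat.choose_eq_zero_of_lt (by omega),
      Nat.choose_eq_zero_of_lt (by omega)]
  | succ N ih =>
    obtain ⟨i, rfl⟩ : ∃ i', i = i' + 1 := ⟨i - 1, by omega⟩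
    have hzero : (if k = 0 then 0 else arrivalCount m n N (R + 1) L (k - 1)) + N.choose (i + 3) =
        N.choose (i + 1) := by
      rcases k with _ | k
      · rw [if_pos rfl, Nat.choose_eq_zero_of_lt (by omega), Nat.choose_eq_zero_of_lt (by omega)]
      · exact ih (by omega) (by omega) (by omega) (by omega)
    have hone : (if R ≤ L then arrivalCount m n N (R + 1) L k
        else arrivalCount m n N R (L + 1) k) + N.choose (i + 2) = N.choose i := by
      split_ifs with h
      · by_cases hb : k + R + 1 < m
        · exact ih (by omega) (by omega) hb (by omega)
        · obtain rfl : k = i := by omega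
          have := arrivalCount_add_choose_of_eq (N := N) (R := R + 1) (L := L) hmn.le (by omega)
            (by omega) (show k + (R + 1) = m by omega)
          rwa [show m + 1 - L = k + 2 by omega] at this
      · exact ih (by omega) (by omega) (by omega) (by omega)
    have hpascal₁ : (N + 1).choose (i + 1 + 2) = N.choose (i + 2) + N.choose (i + 3) :=
      Nat.choose_succ_succ' N (i + 2)
    have hpascal₂ : (N + 1).choose (i + 1) = N.choose i + N.choose (i + 1) :=
      Nat.choose_succ_succ' N i
    rw [arrivalCount_succ]
    omega

theorem stmt_13 (m n k : ℕ) (h1 : m > k + 1) (h2 : m > n) (h3 : 0 < n) :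
    (Finset.univ.filter (fun c : Fin (m + n) → Bool =>
        (List.ofFn c).count false = k ∧ proc (List.ofFn c) = (m, n))).card =
      (Finset.univ.filter (fun c : Fin (m + n) → Bool =>
        (List.ofFn c).count false = k + 2 ∧ proc (List.ofFn c) = (m + 1, n - 1))).card := by
  change arrivalCount m n (m + n) 0 0 k = arrivalCount (m + 1) (n - 1) (m + n) 0 0 (k + 2)
  have hleft := arrivalCount_add_choose_of_lt (N := m + n) (R := 0) (L := 0) (k := k)
    (i := 2 * m - k - 1) h2 le_rfl (by omega) (by omega) (by omega)
  have hright := arrivalCount_add_choose_of_lt (N := m + n) (R := 0) (L := 0) (k := k + 2)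
    (i := 2 * m - k - 1) (by omega : n - 1 < m + 1) le_rfl (by omega) (by omega) (by omega)
  omega
end

section
/- Let b ∈ {0,1}^ℓ be an arrival sequence of length ℓ with exactly k zeros whose merging path contains exactly β bounces. Then (ℓ - 2k)/2 ≤ β and β ≤ (ℓ - k + 1)/2, i.e., ℓ ≤ 2k + 2β and 2β ≤ ℓ - k + 1. -/
/-! Starting from equal lanes, a car goes left only when the right lane is strictly longer, so
`L ≤ R` holds throughout. Every zero and every bounce lengthens the right lane and every other
car lengthens the left one, so the final right lane has length `k + β`; as it is at least half of
`ℓ`, this gives `ℓ ≤ 2k + 2β`. After a bounce the lanes differ by one, so before the next bounce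
some one must have gone left: all bounces but the first are paired with distinct ones going left,
whence `2β ≤ (ℓ - k) + 1`. -/

lemma procAux_fst_add_snd (b : List Bool) (R L : ℕ) :
    (procAux R L b).1 + (procAux R L b).2 = R + L + b.length := by
  induction b generalizing R L with
  | nil => simp [procAux]
  | cons x b ih =>
    simp only [procAux, List.length_cons]
    split <;> rw [ih] <;> omega

lemma procAux_snd_le_fst (b : List Bool) {R L : ℕ} (h : L ≤ R) :
    (procAux R L b).2 ≤ (procAux R L b).1 := by
  induction b generalizing R L with
  | nil => simpa [procAux]
  | cons x b ih =>
    simp only [procAux]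
    split <;> exact ih (by omega)

lemma procAux_fst_eq (b : List Bool) {R L : ℕ} (h : L ≤ R) :
    (procAux R L b).1 = R + b.count false + bncAux R L b := by
  induction b generalizing R L with
  | nil => simp [procAux, bncAux]
  | cons x b ih =>
    have hR := ih (R := R + 1) (L := L) (by omega)
    obtain rfl | hlt := h.eq_or_lt
    · cases x <;> simp [procAux, bncAux, hR] <;> omega
    · have hL := ih (R := R) (L := L + 1) hlt
      cases x
      · simp [procAux, bncAux, hR]
        omega
      · simp [procAux, bncAux, hlt.ne', hlt.not_ge, hL]

lemma two_mul_bncAux_le (b : List Bool) {R L : ℕ} (h : L ≤ R) :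
    2 * bncAux R L b ≤ b.count true + if R = L then 1 else 0 := by
  induction b generalizing R L with
  | nil => simp [bncAux]
  | cons x b ih =>
    have hR : 2 * bncAux (R + 1) L b ≤ b.count true := by
      simpa [show R + 1 ≠ L by omega] using ih (R := R + 1) (L := L) (by omega)
    obtain rfl | hlt := h.eq_or_lt
    · cases x <;> simp [bncAux] <;> omega
    · have hL := ih (R := R) (L := L + 1) hlt
      cases x <;> simp [bncAux, hlt.ne', hlt.not_ge] <;> split_ifs at hL <;> omega

theorem stmt_14 (ℓ k β : ℕ) (b : List Bool) (hlen : b.length = ℓ)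
    (hk : b.count false = k) (hβ : bnc b = β) :
    ℓ ≤ 2 * k + 2 * β ∧ 2 * β ≤ ℓ - k + 1 := by
  have hsum := procAux_fst_add_snd b 0 0
  have hle := procAux_snd_le_fst b (le_refl 0)
  have hright := procAux_fst_eq b (le_refl 0)
  have hbounce := two_mul_bncAux_le b (le_refl 0)
  have hcount := List.count_true_add_count_false b
  simp only [bnc] at hβ
  rw [if_pos rfl] at hbounce
  omega
end

section
/- For every natural number ℓ ≥ 1, the length of a longest trail in the complete graph K_ℓ with a loop at every vertex equals C(ℓ,2) + ℓ if ℓ is odd, and C(ℓ,2) + ℓ/2 + 1 if ℓ is even. -/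
/-!
In the looped complete graph on `ℓ` vertices every vertex has degree `ℓ + 1` (the loop counts
twice), and a trail uses an even number of edge-ends at every vertex other than its two ends.
Summing degrees gives `2m ≤ ℓ(ℓ + 1)`; for even `ℓ` each inner vertex must leave one of its edges
unused, which gives `2m ≤ ℓ² + 2`.

Conversely, a trail on `n` vertices ending at `0` extends to one on `n + 2` vertices by a closed
detour from `0` through the two new vertices, weaving between them across the old vertices
`1, …, n - 1` and using every new edge except, for even `n`, the edge between the two new vertices.
-/

open Finset

namespace LongestTrail

def IsTrail {α : Type*} (v : ℕ → α) (m : ℕ) : Prop :=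
  Set.InjOn (fun i => s(v i, v (i + 1))) (Set.Iio m)

def longestTrailLength (n : ℕ) : ℕ :=
  if Odd n then n.choose 2 + n else n.choose 2 + n / 2 + 1

section Degrees

variable {α : Type*} [DecidableEq α]

def incidence (x : α) : Sym2 α → ℕ :=
  Sym2.lift ⟨fun u w => (if u = x then 1 else 0) + (if w = x then 1 else 0),
    fun _ _ => add_comm _ _⟩

@[simp] lemma incidence_mk (x u w : α) :
    incidence x s(u, w) = (if u = x then 1 else 0) + (if w = x then 1 else 0) := rfl

lemma sum_incidence [Fintype α] (x : α) : ∑ e, incidence x e = Fintype.card α + 1 := by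
  rw [← Fintype.sum_of_injective (Sym2.mkEmbedding x) (Sym2.mkEmbedding x).injective
    (fun y => incidence x s(x, y)) _ ?_ (fun _ => rfl)]
  · simp [sum_add_distrib]
  · intro e he
    by_contra h
    induction e using Sym2.ind with
    | _ u w =>
      apply he
      obtain rfl | rfl : u = x ∨ w = x := by by_contra!; simp_all
      · exact ⟨w, rfl⟩
      · exact ⟨u, Sym2.eq_swap⟩

lemma sum_incidence_le [Fintype α] {v : ℕ → α} {m : ℕ} (hv : IsTrail v m) (x : α) :
    ∑ i ∈ range m, incidence x s(v i, v (i + 1)) ≤ Fintype.card α + 1 := by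
  rw [← sum_incidence x, ← sum_image (g := fun i => s(v i, v (i + 1)))
    (fun i hi j hj h => hv (by simpa using hi) (by simpa using hj) h)]
  exact sum_le_univ_sum_of_nonneg (fun _ => Nat.zero_le _)

lemma even_sum_incidence (v : ℕ → α) (m : ℕ) {x : α} (h0 : v 0 ≠ x) (hm : v m ≠ x) :
    Even (∑ i ∈ range m, incidence x s(v i, v (i + 1))) := by
  have h1 := sum_range_succ (fun i => if v i = x then 1 else 0) m
  have h2 := sum_range_succ' (fun i => if v i = x then 1 else 0) m
  simp only [h0, hm, if_false, add_zero] at h1 h2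
  simp only [incidence_mk, sum_add_distrib]
  exact ⟨_, by rw [← h1, h2]⟩

lemma sum_sum_incidence [Fintype α] (v : ℕ → α) (m : ℕ) :
    ∑ x, ∑ i ∈ range m, incidence x s(v i, v (i + 1)) = 2 * m := by
  rw [sum_comm]
  simp [sum_add_distrib, mul_comm]

end Degrees

section Bound

variable {α : Type*} [Fintype α] [DecidableEq α] {v : ℕ → α} {m : ℕ}

lemma IsTrail.two_mul_le (hv : IsTrail v m) :
    2 * m ≤ Fintype.card α * (Fintype.card α + 1) := by
  calc 2 * m = ∑ x, ∑ i ∈ range m, incidence x s(v i, v (i + 1)) := (sum_sum_incidence v m).symm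
    _ ≤ ∑ _x : α, (Fintype.card α + 1) := sum_le_sum fun x _ => sum_incidence_le hv x
    _ = _ := by simp

lemma IsTrail.two_mul_le_of_even (hv : IsTrail v m) (hα : Even (Fintype.card α)) :
    2 * m ≤ Fintype.card α * Fintype.card α + 2 := by
  have hdeg : ∀ x, ∑ i ∈ range m, incidence x s(v i, v (i + 1)) ≤
      Fintype.card α + ((if v 0 = x then 1 else 0) + (if v m = x then 1 else 0)) := by
    intro x
    have hle := sum_incidence_le hv x
    by_cases h0 : v 0 = x
    · simp only [h0, if_true]; omega
    by_cases hm : v m = x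
    · simp only [hm, if_true]; omega
    obtain ⟨r, hr⟩ := even_sum_incidence v m h0 hm
    obtain ⟨k, hk⟩ := hα
    simp only [h0, hm, if_false]
    omega
  calc 2 * m = ∑ x, ∑ i ∈ range m, incidence x s(v i, v (i + 1)) := (sum_sum_incidence v m).symm
    _ ≤ ∑ x, (Fintype.card α + ((if v 0 = x then 1 else 0) + (if v m = x then 1 else 0))) :=
      sum_le_sum fun x _ => hdeg x
    _ = _ := by simp [sum_add_distrib]

theorem IsTrail.le_longestTrailLength (hv : IsTrail v m) :
    m ≤ longestTrailLength (Fintype.card α) := by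
  have hC : (Fintype.card α).choose 2 * 2 = Fintype.card α * (Fintype.card α - 1) := by
    rw [Nat.choose_two_right, Nat.div_two_mul_two_of_even (Nat.even_mul_pred_self _)]
  unfold longestTrailLength
  split_ifs with h
  · have := hv.two_mul_le
    obtain ⟨k, hk⟩ := h
    rw [hk] at this hC ⊢
    simp only [add_tsub_cancel_right] at hC
    nlinarith
  · have := hv.two_mul_le_of_even (Nat.not_odd_iff_even.mp h)
    obtain ⟨k, hk⟩ := Nat.not_odd_iff_even.mp h
    rw [hk] at this hC ⊢
    rcases k with _ | k
    · simp at this ⊢; omega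
    · have : (k + 1 + (k + 1)) / 2 = k + 1 := by omega
      simp only [this, show k + 1 + (k + 1) - 1 = 2 * k + 1 by omega] at hC ⊢
      nlinarith

end Bound

section Walks

variable {α : Type*}

def walkEdges : List α → List (Sym2 α)
  | x :: y :: t => s(x, y) :: walkEdges (y :: t)
  | _ => []

@[simp] lemma walkEdges_nil : walkEdges ([] : List α) = [] := rfl

@[simp] lemma walkEdges_singleton (x : α) : walkEdges [x] = [] := rfl

@[simp] lemma walkEdges_cons_cons (x y : α) (t : List α) :
    walkEdges (x :: y :: t) = s(x, y) :: walkEdges (y :: t) := rfl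

@[simp] lemma length_walkEdges : ∀ l : List α, (walkEdges l).length = l.length - 1
  | [] | [_] => rfl
  | _ :: y :: t => by simp [length_walkEdges (y :: t)]

lemma getElem_walkEdges : ∀ (l : List α) (i : ℕ) (h : i < (walkEdges l).length),
    (walkEdges l)[i] = s(l[i]'(by simp at h; omega), l[i + 1]'(by simp at h; omega))
  | [], _, h | [_], _, h => by simp at h
  | _ :: _ :: _, 0, _ => rfl
  | _ :: y :: t, i + 1, h => getElem_walkEdges (y :: t) i (by simpa using h)

lemma walkEdges_append_of_getLast? {x : α} (t : List α) :
    ∀ {l : List α}, l.getLast? = some x → walkEdges (l ++ t) = walkEdges l ++ walkEdges (x :: t)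
  | [], h => by simp at h
  | [_], h => by simp_all
  | _ :: y :: l, h => by
    simpa using walkEdges_append_of_getLast? t (l := y :: l) (by simpa using h)

lemma mem_of_mem_walkEdges {e : Sym2 α} {x : α} (hx : x ∈ e) :
    ∀ {l : List α}, e ∈ walkEdges l → x ∈ l
  | [], h | [_], h => by simp at h
  | a :: y :: l, h => by
    rcases List.mem_cons.mp h with rfl | h
    · rcases Sym2.mem_iff.mp hx with rfl | rfl <;> simp
    · exact List.mem_cons_of_mem a (mem_of_mem_walkEdges hx h)

end Walks

section Zigzag

variable {α : Type*}

def zigzag (a b : α) : List α → List α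
  | [] => []
  | x :: xs => x :: b :: zigzag b a xs

@[simp] lemma length_zigzag (a b : α) (xs : List α) : (zigzag a b xs).length = 2 * xs.length := by
  induction xs generalizing a b with
  | nil => rfl
  | cons x xs ih => simp [zigzag, ih]; ring

lemma getLast?_cons_zigzag (a b : α) (xs : List α) :
    (a :: zigzag a b xs).getLast? = some (if Even xs.length then a else b) := by
  induction xs generalizing a b with
  | nil => simp [zigzag]
  | cons x xs ih =>
    simp only [zigzag, List.getLast?_cons_cons, ih, List.length_cons, Nat.even_add_one]
    split_ifs <;> rfl

lemma mem_zigzag {a b y : α} {xs : List α} (h : y ∈ zigzag a b xs) : y ∈ xs ∨ y = a ∨ y = b := by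
  induction xs generalizing a b with
  | nil => simp [zigzag] at h
  | cons x xs ih =>
    simp only [zigzag, List.mem_cons] at h
    rcases h with h | h | h
    · simp [h]
    · simp [h]
    · rcases ih h with h | h | h <;> simp [h]

lemma exists_of_mem_walkEdges_cons_zigzag {a b : α} {e : Sym2 α} {xs : List α}
    (h : e ∈ walkEdges (a :: zigzag a b xs)) : ∃ x ∈ xs, e = s(a, x) ∨ e = s(b, x) := by
  induction xs generalizing a b with
  | nil => simp [zigzag] at h
  | cons x xs ih =>
    simp only [zigzag, walkEdges_cons_cons, List.mem_cons] at h
    rcases h with rfl | rfl | h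
    · exact ⟨x, by simp, by simp⟩
    · exact ⟨x, by simp, by simp [Sym2.eq_swap]⟩
    · obtain ⟨y, hy, hey⟩ := ih h
      exact ⟨y, List.mem_cons_of_mem x hy, hey.symm⟩

lemma nodup_walkEdges_cons_zigzag {a b : α} {xs : List α} (hab : a ≠ b) (ha : a ∉ xs)
    (hb : b ∉ xs) (hxs : xs.Nodup) : (walkEdges (a :: zigzag a b xs)).Nodup := by
  induction xs generalizing a b with
  | nil => simp [zigzag]
  | cons x xs ih =>
    simp only [List.mem_cons, not_or, List.nodup_cons] at ha hb hxs
    have hrest : ∀ e ∈ walkEdges (b :: zigzag b a xs), x ∉ e := by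
      intro e he hxe
      obtain ⟨y, hy, rfl | rfl⟩ := exists_of_mem_walkEdges_cons_zigzag he <;>
        rcases Sym2.mem_iff.mp hxe with rfl | rfl <;> simp_all
    simp only [zigzag, walkEdges_cons_cons, List.nodup_cons, List.mem_cons, Sym2.eq_iff]
    refine ⟨?_, fun h => hrest _ h (Sym2.mem_mk_left x b), ih hab.symm hb.2 ha.2 hxs.2⟩
    rintro (h | h)
    · tauto
    · exact hrest _ h (Sym2.mem_mk_right a x)

end Zigzag

section Construction

def fan (n : ℕ) : List ℕ := n :: zigzag n (n + 1) (List.range' 1 (n - 1))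

/-- The closed walk `0, n, n, 1, n + 1, 2, n, 3, …, 0` through the new vertices `n` and `n + 1`. -/
def detour (n : ℕ) : List ℕ := n :: fan n ++ if Odd n then [n + 1, n + 1, 0] else [n + 1, 0]

lemma nodup_walkEdges_fan (n : ℕ) : (walkEdges (fan n)).Nodup :=
  nodup_walkEdges_cons_zigzag (by omega) (by simp; omega) (by simp; omega) List.nodup_range'

lemma exists_of_mem_walkEdges_fan {n : ℕ} {e : Sym2 ℕ} (he : e ∈ walkEdges (fan n)) :
    ∃ x, 1 ≤ x ∧ x < n ∧ (e = s(n, x) ∨ e = s(n + 1, x)) := by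
  obtain ⟨x, hx, hex⟩ := exists_of_mem_walkEdges_cons_zigzag he
  rw [List.mem_range'_1] at hx
  exact ⟨x, by omega, by omega, hex⟩

lemma getLast?_fan {n : ℕ} (hn : 0 < n) :
    (fan n).getLast? = some (if Odd n then n else n + 1) := by
  obtain ⟨k, rfl⟩ : ∃ k, n = k + 1 := ⟨n - 1, by omega⟩
  simp [fan, getLast?_cons_zigzag, Nat.odd_add_one]

lemma walkEdges_zero_cons_detour {n : ℕ} (hn : 0 < n) :
    walkEdges (0 :: detour n) = s(0, n) :: s(n, n) :: (walkEdges (fan n) ++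
      if Odd n then [s(n, n + 1), s(n + 1, n + 1), s(n + 1, 0)]
      else [s(n + 1, n + 1), s(n + 1, 0)]) := by
  rw [detour, List.cons_append, walkEdges_cons_cons]
  change s(0, n) :: s(n, n) :: walkEdges (fan n ++ _) = _
  rw [walkEdges_append_of_getLast? _ (getLast?_fan hn)]
  split_ifs <;> rfl

lemma nodup_walkEdges_zero_cons_detour {n : ℕ} (hn : 0 < n) :
    (walkEdges (0 :: detour n)).Nodup := by
  have hfan : ∀ u w, (u = 0 ∨ n ≤ u) → (w = 0 ∨ n ≤ w) → s(u, w) ∉ walkEdges (fan n) := by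
    intro u w hu hw h
    obtain ⟨x, hx1, hxn, hx | hx⟩ := exists_of_mem_walkEdges_fan h <;> rw [Sym2.eq_iff] at hx <;>
      omega
  rw [walkEdges_zero_cons_detour hn]
  by_cases h : Odd n <;>
    simp [h, List.nodup_append', List.disjoint_cons_right, nodup_walkEdges_fan, hfan] <;> omega

lemma exists_le_of_mem_walkEdges_zero_cons_detour {n : ℕ} (hn : 0 < n) {e : Sym2 ℕ}
    (he : e ∈ walkEdges (0 :: detour n)) : ∃ x ∈ e, n ≤ x := by
  rw [walkEdges_zero_cons_detour hn] at he
  simp only [List.mem_cons, List.mem_append] at he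
  rcases he with rfl | rfl | he | he
  · simp
  · simp
  · obtain ⟨x, -, -, rfl | rfl⟩ := exists_of_mem_walkEdges_fan he
    · exact ⟨n, Sym2.mem_mk_left _ _, le_rfl⟩
    · exact ⟨n + 1, Sym2.mem_mk_left _ _, by omega⟩
  · by_cases h : Odd n <;> simp [h] at he <;> rcases he with rfl | rfl | rfl <;> simp

lemma length_detour {n : ℕ} (hn : 0 < n) :
    (detour n).length = 2 * n + if Odd n then 3 else 2 := by
  simp only [detour, fan, List.length_append, List.length_cons, length_zigzag, List.length_range']
  split_ifs <;> simp <;> omega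

lemma lt_of_mem_detour {n x : ℕ} (h : x ∈ detour n) : x < n + 2 := by
  simp only [detour, fan, List.mem_append, List.mem_cons] at h
  rcases h with (rfl | rfl | h) | h
  · omega
  · omega
  · rcases mem_zigzag h with h | rfl | rfl
    · rw [List.mem_range'_1] at h; omega
    · omega
    · omega
  · split_ifs at h <;> simp at h <;> omega

lemma getLast?_detour (n : ℕ) : (detour n).getLast? = some 0 := by
  rw [detour, List.getLast?_append]
  split_ifs <;> rfl

lemma exists_trail_list : ∀ n, 0 < n → ∃ l : List ℕ, (∀ x ∈ l, x < n) ∧ l.getLast? = some 0 ∧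
    (walkEdges l).Nodup ∧ (walkEdges l).length = longestTrailLength n
  | 1, _ => ⟨[0, 0], by simp, rfl, by simp, by decide⟩
  | 2, _ => ⟨[1, 1, 0, 0], by simp, rfl, by simp, by decide⟩
  | n + 3, _ => by
    obtain ⟨l, hl, hlast, hnd, hlen⟩ := exists_trail_list (n + 1) (by omega)
    have hedges := walkEdges_append_of_getLast? (detour (n + 1)) hlast
    refine ⟨l ++ detour (n + 1), ?_, by rw [List.getLast?_append, getLast?_detour]; rfl, ?_, ?_⟩
    · intro x hx
      rcases List.mem_append.mp hx with hx | hx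
      · exact (hl x hx).trans (by omega)
      · exact lt_of_mem_detour hx
    · rw [hedges, List.nodup_append']
      refine ⟨hnd, nodup_walkEdges_zero_cons_detour (by omega), fun e he he' => ?_⟩
      obtain ⟨x, hx, hnx⟩ := exists_le_of_mem_walkEdges_zero_cons_detour (by omega) he'
      have := hl x (mem_of_mem_walkEdges hx he)
      omega
    · rw [hedges, List.length_append, hlen, length_walkEdges, List.length_cons,
        length_detour (by omega)]
      have hpar : Odd (n + 3) ↔ Odd (n + 1) := by simp [Nat.odd_add_one]
      have hC : (n + 3).choose 2 = (n + 1).choose 2 + (2 * n + 3) := by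
        rw [Nat.choose_succ_succ' (n + 2), Nat.choose_succ_succ' (n + 1) 1]
        simp; ring
      simp only [longestTrailLength, hpar, hC]
      split_ifs <;> omega

end Construction

lemma exists_isTrail_of_nodup {ℓ : ℕ} (hℓ : 0 < ℓ) {l : List ℕ} (hl : ∀ x ∈ l, x < ℓ)
    (hnd : (walkEdges l).Nodup) : ∃ v : ℕ → Fin ℓ, IsTrail v (walkEdges l).length := by
  refine ⟨fun i => ⟨l.getD i 0 % ℓ, Nat.mod_lt _ hℓ⟩, fun i hi j hj hij => ?_⟩
  have hval : ∀ k (hk : k < l.length), l.getD k 0 % ℓ = l[k] := fun k hk => by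
    rw [List.getD_eq_getElem _ _ hk, Nat.mod_eq_of_lt (hl _ (List.getElem_mem hk))]
  simp only [Set.mem_Iio, length_walkEdges] at hi hj
  have h := congrArg (Sym2.map Fin.val) hij
  simp only [Sym2.map_mk, hval i (by omega), hval (i + 1) (by omega), hval j (by omega),
    hval (j + 1) (by omega)] at h
  rwa [← getElem_walkEdges, ← getElem_walkEdges, hnd.getElem_inj_iff] at h
  all_goals simp; omega

end LongestTrail

theorem stmt_17 (ℓ : ℕ) (hℓ : 1 ≤ ℓ) :
    IsGreatest
      {m : ℕ | ∃ v : ℕ → Fin ℓ,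
        ∀ i j : ℕ, i < m → j < m → s(v i, v (i + 1)) = s(v j, v (j + 1)) → i = j}
      (if Odd ℓ then Nat.choose ℓ 2 + ℓ else Nat.choose ℓ 2 + ℓ / 2 + 1) := by
  show IsGreatest _ (LongestTrail.longestTrailLength ℓ)
  refine ⟨?_, fun m ⟨v, hv⟩ => ?_⟩
  · obtain ⟨l, hl, -, hnd, hlen⟩ := LongestTrail.exists_trail_list ℓ hℓ
    obtain ⟨v, hv⟩ := LongestTrail.exists_isTrail_of_nodup hℓ hl hnd
    rw [hlen] at hv
    exact ⟨v, fun i j hi hj h => hv hi hj h⟩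
  · have hv' : LongestTrail.IsTrail v m := fun i hi j hj h => hv i j hi hj h
    simpa only [Fintype.card_fin] using hv'.le_longestTrailLength
end

section
/- Let ℓ ≥ 1. The sum over all arrival sequences of length ℓ with exactly one zero of the resulting right-lane length equals C(ℓ,2) + ℓ if ℓ is odd, and C(ℓ,2) + ℓ/2 + 1 if ℓ is even. -/
theorem procAux_true_cons (R L : ℕ) (b : List Bool) :
    procAux R L (true :: b) = if R ≤ L then procAux (R + 1) L b else procAux R (L + 1) b := by
  simp [procAux]

theorem procAux_replicate_true (n : ℕ) : ∀ R L : ℕ,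
    procAux R L (List.replicate n true) =
      (min (R + n) (max R ((R + L + n + 1) / 2)),
        R + L + n - min (R + n) (max R ((R + L + n + 1) / 2))) := by
  induction n with
  | zero => intro R L; simp [procAux]
  | succ n ih =>
    intro R L
    rw [List.replicate_succ, procAux_true_cons]
    split_ifs <;> rw [ih, Prod.mk.injEq] <;> omega

theorem procAux_append (R L : ℕ) (b b' : List Bool) :
    procAux R L (b ++ b') = procAux (procAux R L b).1 (procAux R L b).2 b' := by
  induction b generalizing R L with
  | nil => rfl
  | cons x b ih => simp only [List.cons_append, procAux]; split <;> exact ih ..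

theorem rlen_replicate_true_false_replicate_true (j m : ℕ) :
    rlen (List.replicate j true ++ false :: List.replicate m true) =
      if m = 0 then (j + 1) / 2 + 1 else (j + m + 2) / 2 := by
  simp only [rlen, proc, procAux_append, procAux_replicate_true, procAux, true_or, if_true]
  split_ifs <;> omega

theorem List.count_ofFn {α : Type*} [DecidableEq α] {n : ℕ} (c : Fin n → α) (x : α) :
    (List.ofFn c).count x = (Finset.univ.filter (c · = x)).card := by
  rw [List.count_eq_countP, List.countP_eq_length_filter, Fin.univ_def, List.ofFn_eq_map]
  simp only [List.filter_map, Function.comp_def, List.length_map, Finset.card, Finset.filter,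
    Multiset.filter_coe, Multiset.coe_card]
  rfl

theorem List.ofFn_decide_ne {n : ℕ} (j : Fin n) :
    List.ofFn (fun i : Fin n => decide (i ≠ j)) =
      List.replicate j true ++ false :: List.replicate (n - 1 - j) true := by
  apply List.ext_getElem
  · simp only [List.length_ofFn, List.length_append, List.length_replicate, List.length_cons]
    omega
  · intro i hi _
    simp only [List.length_ofFn] at hi
    simp only [List.getElem_ofFn, List.getElem_append, List.getElem_cons, List.getElem_replicate,
      List.length_replicate]
    split_ifs <;> simp [Fin.ext_iff] <;> omega

theorem filter_count_false_eq_one_eq_image (n : ℕ) :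
    Finset.univ.filter (fun c : Fin n → Bool => (List.ofFn c).count false = 1) =
      Finset.univ.image (fun j i : Fin n => decide (i ≠ j)) := by
  ext c
  simp only [Finset.mem_filter, Finset.mem_univ, true_and, Finset.mem_image, List.count_ofFn,
    Finset.card_eq_one, Finset.ext_iff, Finset.mem_singleton, funext_iff, ne_eq, decide_not,
    Bool.not_eq_eq_eq_not]
  exact exists_congr fun j => forall_congr' fun i => by cases c i <;> simp [eq_comm]

theorem Fin.decide_ne_injective (n : ℕ) :
    Function.Injective (fun j i : Fin n => decide (i ≠ j)) := by
  intro j j' h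
  simpa using congrFun h j

theorem Nat.mul_succ_succ_div_two_add_eq (n : ℕ) :
    n * ((n + 2) / 2) + ((n + 1) / 2 + 1) =
      if Odd (n + 1) then (n + 1).choose 2 + (n + 1) else (n + 1).choose 2 + (n + 1) / 2 + 1 := by
  have h2 : (n + 1).choose 2 * 2 = (n + 1) * n := by
    rw [Nat.choose_two_right, Nat.div_mul_cancel (Nat.even_mul_pred_self _).two_dvd]
    simp
  obtain ⟨k, rfl | rfl⟩ := Nat.even_or_odd' n
  · rw [if_pos (by simp [parity_simps])]
    rw [show (2 * k + 2) / 2 = k + 1 by omega, show (2 * k + 1) / 2 = k by omega]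
    nlinarith
  · rw [if_neg (by simp [parity_simps])]
    rw [show (2 * k + 1 + 2) / 2 = k + 1 by omega, show (2 * k + 1 + 1) / 2 = k + 1 by omega]
    nlinarith

theorem stmt_18 (ℓ : ℕ) (hℓ : 1 ≤ ℓ) :
    (∑ c ∈ Finset.univ.filter (fun c : Fin ℓ → Bool => (List.ofFn c).count false = 1),
        rlen (List.ofFn c)) =
      if Odd ℓ then Nat.choose ℓ 2 + ℓ else Nat.choose ℓ 2 + ℓ / 2 + 1 := by
  obtain ⟨n, rfl⟩ := Nat.exists_eq_add_of_le' hℓ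
  rw [filter_count_false_eq_one_eq_image, Finset.sum_image (Fin.decide_ne_injective _).injOn,
    ← Nat.mul_succ_succ_div_two_add_eq]
  calc ∑ j : Fin (n + 1), rlen (List.ofFn fun i => decide (i ≠ j))
      = ∑ j : Fin (n + 1), if (j : ℕ) = n then (n + 1) / 2 + 1 else (n + 2) / 2 :=
        Finset.sum_congr rfl fun j _ => by
          rw [List.ofFn_decide_ne, rlen_replicate_true_false_replicate_true]
          split_ifs <;> omega
    _ = n * ((n + 2) / 2) + ((n + 1) / 2 + 1) := by
        simp [Fin.sum_univ_castSucc, ne_of_lt]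
end

section
/- For any arrival sequence b ∈ {0,1}^ℓ, the color-blind equivalence class of b has exactly 2^{t(b)} elements, where t(b) is the number of steps at which the merging path of b starts while resting on the diagonal (R = L before the step). In particular, the class size is always even for ℓ ≥ 1. -/
/-- The right lane vector: indices (1-based) of cars that end in the right lane, in order. -/
def rvecAux : ℕ → ℕ → ℕ → List Bool → List ℕ
  | _, _, _, [] => []
  | R, L, i, bi :: rest =>
    if bi = false ∨ R ≤ L then i :: rvecAux (R + 1) L (i + 1) rest
    else rvecAux R (L + 1) (i + 1) rest

def rvec (b : List Bool) : List ℕ := rvecAux 0 0 1 b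

/-- The number of steps that start with the merging path resting on the diagonal (`R = L`). -/
def touchesAux : ℕ → ℕ → List Bool → ℕ
  | _, _, [] => 0
  | R, L, bi :: rest =>
    (if R = L then 1 else 0) +
      (if bi = false ∨ R ≤ L then touchesAux (R + 1) L rest else touchesAux R (L + 1) rest)

def touches (b : List Bool) : ℕ := touchesAux 0 0 b

open Finset

lemma le_of_mem_rvecAux {R L i : ℕ} {l : List Bool} {j : ℕ} (hj : j ∈ rvecAux R L i l) : i ≤ j := by
  induction l generalizing R L i with
  | nil => simp [rvecAux] at hj
  | cons x l ih =>
    rw [rvecAux] at hj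
    split at hj
    · rcases List.mem_cons.1 hj with rfl | hj
      · exact le_rfl
      · exact (ih hj).trans' (Nat.le_succ i)
    · exact (ih hj).trans' (Nat.le_succ i)

lemma rvecAux_succ_ne_cons (R L i : ℕ) (l : List Bool) (B : List ℕ) :
    rvecAux R L (i + 1) l ≠ i :: B := fun h =>
  (le_of_mem_rvecAux (h ▸ List.mem_cons_self : i ∈ rvecAux R L (i + 1) l)).not_gt (Nat.lt_succ_self i)

lemma card_filter_fin_succ_bool (n : ℕ) (Q : Bool → (Fin n → Bool) → Prop) [∀ x a, Decidable (Q x a)] :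
    #{a : Fin (n + 1) → Bool | Q (a 0) fun j => a j.succ} = #{a | Q false a} + #{a | Q true a} := by
  simp only [Finset.card_filter]
  rw [← (Fin.consEquiv fun _ : Fin (n + 1) => Bool).sum_comp, Fintype.sum_prod_type, Fintype.sum_bool]
  simp [Fin.consEquiv, add_comm]

theorem card_filter_rvecAux_eq (n : ℕ) {R L : ℕ} (i : ℕ) (hLR : L ≤ R) (b : Fin n → Bool) :
    #{a : Fin n → Bool | rvecAux R L i (List.ofFn a) = rvecAux R L i (List.ofFn b)}
      = 2 ^ touchesAux R L (List.ofFn b) := by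
  induction n generalizing R L i with
  | zero => simp [touchesAux]
  | succ n ih =>
    simp_rw [List.ofFn_succ]
    rw [card_filter_fin_succ_bool n
      (fun x a => rvecAux R L i (x :: List.ofFn a) = rvecAux R L i (b 0 :: List.ofFn fun j => b j.succ))]
    rcases hLR.eq_or_lt with rfl | hlt
    · simp only [rvecAux, touchesAux, le_refl, or_true, if_true, List.cons.injEq, true_and]
      rw [ih _ (Nat.le_succ L)]
      ring
    · have hRL : ¬ R ≤ L := hlt.not_ge
      cases b 0
      · simp [rvecAux, touchesAux, hRL, hlt.ne', rvecAux_succ_ne_cons,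
          ih _ (Nat.le_succ_of_le hlt.le)]
      · simp [rvecAux, touchesAux, hRL, hlt.ne', (rvecAux_succ_ne_cons _ _ _ _ _).symm,
          ih _ (Nat.succ_le_of_lt hlt)]

lemma touches_cons (x : Bool) (l : List Bool) : touches (x :: l) = 1 + touchesAux 1 0 l := by
  simp [touches, touchesAux]

theorem stmt_19 (ℓ : ℕ) (b : Fin ℓ → Bool) :
    (Finset.univ.filter (fun a : Fin ℓ → Bool =>
        rvec (List.ofFn a) = rvec (List.ofFn b))).card = 2 ^ touches (List.ofFn b) ∧
      (1 ≤ ℓ →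
        Even (Finset.univ.filter (fun a : Fin ℓ → Bool =>
          rvec (List.ofFn a) = rvec (List.ofFn b))).card) := by
  have hcard : #{a : Fin ℓ → Bool | rvec (List.ofFn a) = rvec (List.ofFn b)}
      = 2 ^ touches (List.ofFn b) :=
    card_filter_rvecAux_eq ℓ 1 (le_refl 0) b
  refine ⟨hcard, fun hℓ => ?_⟩
  obtain ⟨n, rfl⟩ := Nat.exists_eq_add_of_le' hℓ
  rw [hcard, List.ofFn_succ, touches_cons, Nat.even_pow]
  exact ⟨even_two, by omega⟩
end
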